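/- arXiv:2007.02547 — 5 statements merged into one kernel-verified Lean document; each statement's English description precedes it below -/
import Mathlib

section
/- Suppose η = 0 and θ > 0. Let d_J > 0 satisfy λ·∫₀^{d_J} ( (1+θ) − (1+θ)^{y/d_J} )·S_Y(y) dy − (β²·ln(1+θ))/(2·d_J) = (1+θ)λμ − c, and let d_D > 0 satisfy θλ·∫₀^{d_D} (1 − y/d_D)·S_Y(y) dy − (β²·θ)/(2·d_D) = (1+θ)λμ − c. Then d_J ≤ d_D. Consequently min(d_J, y) ≤ min(d_D, y) for every y ≥ 0, i.e. the adjustment-coefficient-maximizing deductible is at most the ruin-minimizing deductible of the diffusion approximation. -/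
open MeasureTheory Filter Set

theorem stmt_12
    {Ω : Type*} [MeasurableSpace Ω] (P : Measure Ω) [IsProbabilityMeasure P]
    (Y : Ω → ℝ) (hYmeas : Measurable Y)
    (hYpos : P {ω | 0 < Y ω} = 1)
    (hfull : ∀ y : ℝ, 0 < y → 0 < P {ω | Y ω ≤ y} ∧ 0 < P {ω | y < Y ω})
    (μ σ2 : ℝ) (hμ : μ = ∫ ω, Y ω ∂P) (hσ2 : σ2 = ∫ ω, (Y ω) ^ 2 ∂P)
    (hYint : Integrable Y P) (hY2int : Integrable (fun ω => (Y ω) ^ 2) P)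
    (lam β θ c : ℝ)
    (hlam : 0 < lam) (hβ : 0 < β) (hθ : 0 < θ)
    (hc1 : lam * μ < c) (hc2 : c < (1 + θ) * lam * μ)
    (S : ℝ → ℝ) (hS : ∀ y, S y = (P {ω | y < Y ω}).toReal)
    (dJ dD : ℝ) (hdJ : 0 < dJ) (hdD : 0 < dD)
    (hdJeq : lam * (∫ y in (0 : ℝ)..dJ, ((1 + θ) - (1 + θ) ^ (y / dJ)) * S y)
        - β ^ 2 * Real.log (1 + θ) / (2 * dJ) = (1 + θ) * lam * μ - c)
    (hdDeq : θ * lam * (∫ y in (0 : ℝ)..dD, (1 - y / dD) * S y)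
        - β ^ 2 * θ / (2 * dD) = (1 + θ) * lam * μ - c) :
    dJ ≤ dD ∧ ∀ y : ℝ, 0 ≤ y → min dJ y ≤ min dD y := by
  have hSnn : ∀ y, 0 ≤ S y := by intro y; rw [hS]; exact ENNReal.toReal_nonneg
  have hSanti : Antitone S := by
    intro a b hab
    rw [hS, hS]
    exact ENNReal.toReal_mono (measure_ne_top _ _)
      (measure_mono (fun ω (h : b < Y ω) => lt_of_le_of_lt hab h))
  have hSint : ∀ a b : ℝ, IntervalIntegrable S volume a b := fun a b =>
    (hSanti.antitoneOn _).intervalIntegrable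
  have h1θ : (0:ℝ) < 1 + θ := by linarith
  -- continuity facts
  have hcontJ : Continuous (fun y : ℝ => (1 + θ) - (1 + θ) ^ (y / dJ)) := by
    apply continuous_const.sub
    exact Continuous.rpow continuous_const (continuous_id.div_const _)
      (fun x => Or.inl (ne_of_gt h1θ))
  have hcont2 : ∀ d : ℝ, Continuous (fun y : ℝ => θ * (1 - y / d)) := by
    intro d; continuity
  -- integrability
  have hintJ : IntervalIntegrable (fun y => ((1 + θ) - (1 + θ) ^ (y / dJ)) * S y)
      volume 0 dJ := (hSint 0 dJ).continuousOn_mul hcontJ.continuousOn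
  have hintD : ∀ d a b : ℝ, IntervalIntegrable (fun y => θ * (1 - y / d) * S y) volume a b := by
    intro d a b
    have := (hSint a b).continuousOn_mul (hcont2 d).continuousOn
    simpa using this
  -- Bernoulli: pointwise inequality on [0, dJ]
  have hptJ : ∀ y ∈ Icc (0:ℝ) dJ,
      θ * (1 - y / dJ) * S y ≤ ((1 + θ) - (1 + θ) ^ (y / dJ)) * S y := by
    intro y hy
    apply mul_le_mul_of_nonneg_right _ (hSnn y)
    have ht0 : 0 ≤ y / dJ := div_nonneg hy.1 hdJ.le
    have ht1 : y / dJ ≤ 1 := (div_le_one hdJ).2 hy.2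
    have := rpow_one_add_le_one_add_mul_self (by linarith : (-1:ℝ) ≤ θ) ht0 ht1
    nlinarith [this]
  have hA : (∫ y in (0:ℝ)..dJ, θ * (1 - y / dJ) * S y)
      ≤ ∫ y in (0:ℝ)..dJ, ((1 + θ) - (1 + θ) ^ (y / dJ)) * S y :=
    intervalIntegral.integral_mono_on hdJ.le (hintD dJ 0 dJ) hintJ hptJ
  have hlog : Real.log (1 + θ) ≤ θ := by
    have := Real.log_le_sub_one_of_pos h1θ
    linarith
  have hlog0 : 0 ≤ Real.log (1 + θ) := Real.log_nonneg (by linarith)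
  -- main: dJ ≤ dD
  have hmain : dJ ≤ dD := by
    by_contra hlt
    push_neg at hlt
    -- hlt : dD < dJ
    -- step 1 : ∫₀^{dD} θ(1-y/dD) S ≤ ∫₀^{dD} θ(1-y/dJ) S
    have hstep1 : (∫ y in (0:ℝ)..dD, θ * (1 - y / dD) * S y)
        ≤ ∫ y in (0:ℝ)..dD, θ * (1 - y / dJ) * S y := by
      apply intervalIntegral.integral_mono_on hdD.le (hintD dD 0 dD) (hintD dJ 0 dD)
      intro y hy
      apply mul_le_mul_of_nonneg_right _ (hSnn y)
      have : y / dJ ≤ y / dD := div_le_div_of_nonneg_left hy.1 hdD hlt.le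
      nlinarith
    -- step 2 : ∫₀^{dD} θ(1-y/dJ) S ≤ ∫₀^{dJ} θ(1-y/dJ) S
    have hstep2 : (∫ y in (0:ℝ)..dD, θ * (1 - y / dJ) * S y)
        ≤ ∫ y in (0:ℝ)..dJ, θ * (1 - y / dJ) * S y := by
      have hsplit : (∫ y in (0:ℝ)..dJ, θ * (1 - y / dJ) * S y)
          = (∫ y in (0:ℝ)..dD, θ * (1 - y / dJ) * S y)
            + ∫ y in dD..dJ, θ * (1 - y / dJ) * S y :=
        (intervalIntegral.integral_add_adjacent_intervals
          (hintD dJ 0 dD) (hintD dJ dD dJ)).symm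
      have hnn : 0 ≤ ∫ y in dD..dJ, θ * (1 - y / dJ) * S y := by
        apply intervalIntegral.integral_nonneg hlt.le
        intro y hy
        apply mul_nonneg _ (hSnn y)
        apply mul_nonneg hθ.le
        have : y / dJ ≤ 1 := (div_le_one hdJ).2 hy.2
        linarith
      linarith
    -- pull constants out
    have hpullD : (∫ y in (0:ℝ)..dD, θ * (1 - y / dD) * S y)
        = θ * ∫ y in (0:ℝ)..dD, (1 - y / dD) * S y := by
      rw [← intervalIntegral.integral_const_mul]
      simp [mul_assoc]
    -- denominators
    have hdiv1 : β ^ 2 * θ / (2 * dJ) < β ^ 2 * θ / (2 * dD) := by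
      apply div_lt_div_of_pos_left (by positivity) (by linarith) (by linarith)
    have hdiv2 : β ^ 2 * Real.log (1 + θ) / (2 * dJ) ≤ β ^ 2 * θ / (2 * dJ) := by
      apply div_le_div_of_nonneg_right _ (by linarith)
      nlinarith
    -- combine
    have hmul : lam * (θ * ∫ y in (0:ℝ)..dJ, (1 - y / dJ) * S y)
        ≤ lam * ∫ y in (0:ℝ)..dJ, ((1 + θ) - (1 + θ) ^ (y / dJ)) * S y := by
      apply mul_le_mul_of_nonneg_left _ hlam.le
      rw [← intervalIntegral.integral_const_mul]
      simpa [mul_assoc] using hA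
    have hmul2 : θ * lam * (∫ y in (0:ℝ)..dD, (1 - y / dD) * S y)
        ≤ θ * lam * ∫ y in (0:ℝ)..dJ, (1 - y / dJ) * S y := by
      apply mul_le_mul_of_nonneg_left _ (by positivity)
      have h12 := hstep1.trans hstep2
      rw [hpullD] at h12
      have hpullJ : (∫ y in (0:ℝ)..dJ, θ * (1 - y / dJ) * S y)
          = θ * ∫ y in (0:ℝ)..dJ, (1 - y / dJ) * S y := by
        rw [← intervalIntegral.integral_const_mul]
        simp [mul_assoc]
      rw [hpullJ] at h12
      exact le_of_mul_le_mul_left h12 hθ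
    nlinarith [hmul, hmul2, hdiv1, hdiv2, hdJeq, hdDeq]
  refine ⟨hmain, fun y hy => min_le_min hmain le_rfl⟩
end

section
/- Let η > 0 and 0 < ρ < ρ'. For each y ≥ 0 let R_c(y) denote the unique nonnegative solution R of 1 + ηy − ηR = e^{ρR} (so R_c(0) = 0). Then there exists y₀ > 0 such that R_c(y) > (η/(ρ'+η))·y if and only if 0 < y < y₀. -/
set_option maxHeartbeats 1000000

open Real

/-- slope of exp at 0 is strictly monotone: for 0 < a < b, (e^a-1)/a < (e^b-1)/b -/
lemma exp_slope_lt {a b : ℝ} (ha : 0 < a) (hab : a < b) :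
    (Real.exp a - 1) / a < (Real.exp b - 1) / b := by
  have h := strictConvexOn_exp.secant_strict_mono (a := 0) (x := a) (y := b)
    (Set.mem_univ _) (Set.mem_univ _) (Set.mem_univ _) (ne_of_gt ha)
    (ne_of_gt (ha.trans hab)) hab
  simpa using h

theorem stmt_13 (η ρ ρ' : ℝ) (hη : 0 < η) (hρ : 0 < ρ) (hρρ' : ρ < ρ')
    (Rc : ℝ → ℝ)
    (hRc : ∀ y : ℝ, 0 ≤ y →
      0 ≤ Rc y ∧ 1 + η * y - η * Rc y = Real.exp (ρ * Rc y)) :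
    ∃ y0 : ℝ, 0 < y0 ∧
      ∀ y : ℝ, 0 ≤ y → (η / (ρ' + η) * y < Rc y ↔ 0 < y ∧ y < y0) := by
  set ψ : ℝ → ℝ := fun R => Real.exp (ρ * R) - 1 - ρ' * R with hψ
  -- R₁ : a point where ψ < 0
  have hs : 1 < ρ' / ρ := (one_lt_div hρ).mpr hρρ'
  have hlog : 0 < Real.log (ρ' / ρ) := Real.log_pos hs
  set R₁ : ℝ := Real.log (ρ' / ρ) / (2 * ρ) with hR₁def
  have hR₁pos : 0 < R₁ := div_pos hlog (by linarith)
  have hx1 : ρ * R₁ = Real.log (ρ' / ρ) / 2 := by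
    rw [hR₁def, mul_div_assoc', mul_comm 2 ρ, mul_div_mul_left _ _ hρ.ne']
  have hexpR₁ : Real.exp (ρ * R₁) < ρ' / ρ := by
    rw [hx1]
    calc Real.exp (Real.log (ρ' / ρ) / 2) < Real.exp (Real.log (ρ' / ρ)) := by
          apply Real.exp_lt_exp.mpr; linarith
      _ = ρ' / ρ := Real.exp_log (by positivity)
  have hψR₁ : ψ R₁ < 0 := by
    have hx : 0 < ρ * R₁ := by positivity
    -- e^x - 1 ≤ x e^x
    have h1 : Real.exp (ρ * R₁) - 1 ≤ (ρ * R₁) * Real.exp (ρ * R₁) := by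
      have := Real.add_one_le_exp (-(ρ * R₁))
      have hpos := Real.exp_pos (ρ * R₁)
      have hmul : (-(ρ * R₁) + 1) * Real.exp (ρ * R₁) ≤
          Real.exp (-(ρ * R₁)) * Real.exp (ρ * R₁) :=
        mul_le_mul_of_nonneg_right this (le_of_lt hpos)
      rw [← Real.exp_add, neg_add_cancel, Real.exp_zero] at hmul
      nlinarith
    have h2 : (ρ * R₁) * Real.exp (ρ * R₁) < (ρ * R₁) * (ρ' / ρ) :=
      mul_lt_mul_of_pos_left hexpR₁ hx
    have h3 : (ρ * R₁) * (ρ' / ρ) = ρ' * R₁ := by field_simp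
    simp only [hψ]; nlinarith
  -- M : a point where ψ > 0
  obtain ⟨M, hMR₁, hMbig⟩ : ∃ M : ℝ, R₁ < M ∧ 4 * (ρ' - ρ) / ρ ^ 2 < M := by
    refine ⟨max R₁ (4 * (ρ' - ρ) / ρ ^ 2) + 1, ?_, ?_⟩
    · have := le_max_left R₁ (4 * (ρ' - ρ) / ρ ^ 2); linarith
    · have := le_max_right R₁ (4 * (ρ' - ρ) / ρ ^ 2); linarith
  have hMpos : 0 < M := hR₁pos.trans hMR₁
  have hψM : 0 < ψ M := by
    have h1 : ρ * M / 2 + 1 < Real.exp (ρ * M / 2) :=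
      Real.add_one_lt_exp (by positivity : (0:ℝ) < ρ * M / 2).ne'
    have h2 : Real.exp (ρ * M / 2) * Real.exp (ρ * M / 2) = Real.exp (ρ * M) := by
      rw [← Real.exp_add]; ring_nf
    have h3 : ρ ^ 2 * M / 4 > ρ' - ρ := by
      have := (div_lt_iff₀ (by positivity : (0:ℝ) < ρ ^ 2)).mp hMbig
      linarith [mul_comm M (ρ ^ 2)]
    have h4 : (1 + ρ * M / 2) ^ 2 > 1 + ρ' * M := by nlinarith
    have h5 : (1 + ρ * M / 2) ^ 2 < Real.exp (ρ * M) := by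
      rw [← h2]; nlinarith [Real.exp_pos (ρ * M / 2), (by positivity : (0:ℝ) < ρ * M / 2)]
    simp only [hψ]; linarith
  -- root R₀ of ψ by IVT
  have hcont : ContinuousOn ψ (Set.Icc R₁ M) := by
    apply Continuous.continuousOn
    exact ((Real.continuous_exp.comp (continuous_const.mul continuous_id)).sub
      continuous_const).sub (continuous_const.mul continuous_id)
  obtain ⟨R₀, hR₀mem, hR₀⟩ := intermediate_value_Icc (le_of_lt hMR₁) hcont
    (⟨le_of_lt hψR₁, le_of_lt hψM⟩ : (0:ℝ) ∈ Set.Icc (ψ R₁) (ψ M))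
  have hR₀pos : 0 < R₀ := lt_of_lt_of_le hR₁pos hR₀mem.1
  have hR₀eq : Real.exp (ρ * R₀) = 1 + ρ' * R₀ := by
    have : ψ R₀ = 0 := hR₀
    simp only [hψ] at this; linarith
  -- sign characterization: for R ≥ 0, ψ R < 0 ↔ 0 < R ∧ R < R₀
  have hsign : ∀ R : ℝ, 0 ≤ R → (ψ R < 0 ↔ 0 < R ∧ R < R₀) := by
    intro R hR
    have key : ∀ a b : ℝ, 0 < a → a < b →
        (Real.exp (ρ * a) - 1) / a < (Real.exp (ρ * b) - 1) / b := by
      intro a b ha hab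
      have h := exp_slope_lt (a := ρ * a) (b := ρ * b) (by positivity)
        (by exact mul_lt_mul_of_pos_left hab hρ)
      have hbpos : 0 < b := ha.trans hab
      have ha' : (Real.exp (ρ * a) - 1) / a = ρ * ((Real.exp (ρ * a) - 1) / (ρ * a)) := by
        rw [mul_div_assoc', mul_comm ρ (Real.exp (ρ * a) - 1), mul_comm ρ a,
          mul_div_mul_right _ _ hρ.ne']
      have hb' : (Real.exp (ρ * b) - 1) / b = ρ * ((Real.exp (ρ * b) - 1) / (ρ * b)) := by
        rw [mul_div_assoc', mul_comm ρ (Real.exp (ρ * b) - 1), mul_comm ρ b,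
          mul_div_mul_right _ _ hρ.ne']
      rw [ha', hb']
      exact mul_lt_mul_of_pos_left h hρ
    have hq₀ : (Real.exp (ρ * R₀) - 1) / R₀ = ρ' := by
      rw [hR₀eq]; field_simp; ring
    constructor
    · intro hlt
      have hRpos : 0 < R := by
        rcases eq_or_lt_of_le hR with h | h
        · exfalso; simp only [hψ, ← h] at hlt; simp at hlt
        · exact h
      refine ⟨hRpos, ?_⟩
      by_contra hge
      push_neg at hge
      rcases eq_or_lt_of_le hge with h | h
      · have hz : ψ R = 0 := h ▸ hR₀
        linarith
      · have hkey := key R₀ R hR₀pos h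
        rw [hq₀] at hkey
        have h' : ρ' * R < Real.exp (ρ * R) - 1 := (lt_div_iff₀ hRpos).mp hkey
        simp only [hψ] at hlt; linarith
    · rintro ⟨hRpos, hRlt⟩
      have := key R R₀ hRpos hRlt
      rw [hq₀] at this
      have h' : Real.exp (ρ * R) - 1 < ρ' * R := (div_lt_iff₀ hRpos).mp this
      simp only [hψ]; linarith
  -- the map g(R) = (e^{ρR} - 1 + ηR)/η and y₀
  set y0 : ℝ := (Real.exp (ρ * R₀) - 1 + η * R₀) / η with hy0def
  have hy0eq : η * y0 = Real.exp (ρ * R₀) - 1 + η * R₀ := by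
    rw [hy0def]; field_simp
  have hy0pos : 0 < y0 := by
    rw [hy0def]
    apply div_pos _ hη
    nlinarith [Real.add_one_lt_exp (ne_of_gt (by positivity : (0:ℝ) < ρ * R₀))]
  refine ⟨y0, hy0pos, ?_⟩
  intro y hy
  obtain ⟨hRcnn, hRceq⟩ := hRc y hy
  set R := Rc y with hRdef
  have hgy : η * y = Real.exp (ρ * R) - 1 + η * R := by linarith
  -- c*y < R ↔ ψ R < 0
  have hcη : 0 < ρ' + η := by linarith
  have step1 : η / (ρ' + η) * y < R ↔ ψ R < 0 := by
    rw [div_mul_eq_mul_div, div_lt_iff₀ hcη]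
    simp only [hψ]
    have hexpand : R * (ρ' + η) = ρ' * R + η * R := by ring
    constructor <;> intro h <;> linarith
  -- 0 < y ↔ 0 < R, y < y0 ↔ R < R₀ (via strict mono of g)
  have hgmono : ∀ a b : ℝ, a < b →
      Real.exp (ρ * a) - 1 + η * a < Real.exp (ρ * b) - 1 + η * b := by
    intro a b hab
    have := Real.exp_lt_exp.mpr (mul_lt_mul_of_pos_left hab hρ)
    nlinarith
  have hyR : 0 < y ↔ 0 < R := by
    constructor
    · intro h
      by_contra hR0
      push_neg at hR0
      have hR0' : R = 0 := le_antisymm hR0 hRcnn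
      rw [hR0', mul_zero, Real.exp_zero] at hgy
      have := mul_pos hη h
      linarith
    · intro h
      have := hgmono 0 R h
      simp only [mul_zero, Real.exp_zero] at this
      have h2 : 0 < η * y := by linarith
      by_contra hy'
      push_neg at hy'
      nlinarith
  have hyy0 : y < y0 ↔ R < R₀ := by
    constructor
    · intro h
      by_contra hge
      push_neg at hge
      rcases eq_or_lt_of_le hge with he | hlt
      · rw [he] at hy0eq
        nlinarith [mul_pos hη (sub_pos.mpr h)]
      · have := hgmono R₀ R hlt
        nlinarith [mul_pos hη (sub_pos.mpr h)]
    · intro h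
      have h2 := hgmono R R₀ h
      have h3 : η * y < η * y0 := by linarith
      by_contra hy'
      push_neg at hy'
      nlinarith
  rw [step1, hsign R hRcnn, hyR, hyy0]
end

section
/- Let R be a retention function with P(R(Y) > 0) > 0, and let r > 0 with E[e^{r·R(Y)}] < ∞ satisfy the Lundberg equation [−κ + λ·((1+θ)·E[R(Y)] + η·E[Y·R(Y)] − (η/2)·E[R(Y)²])]·r − (β²/2)·r² − λ·(E[e^{r·R(Y)}] − 1) = 0. Then r < ρ_D(R), i.e. the adjustment coefficient of the classical risk process perturbed by a diffusion under R is strictly smaller than the adjustment coefficient of its diffusion approximation under R. In particular, ρ_J < α* − η, where ρ_J is the unique positive solution of c − λμ = λ·∫₀^∞ (e^{ρ·R̂(ρ,y)} − 1)·S_Y(y) dy + (β²/2)·ρ (with R̂(ρ,y) = y for y < (1/ρ)·ln(1+θ) and R̂(ρ,y) the unique nonnegative root of (1+θ) + ηy − ηR = e^{ρR} otherwise) and α* > η is the unique solution of c − λμ = (α − η)·(λ·∫₀^∞ min((θ+ηy)/α, y)·S_Y(y) dy + β²/2); equivalently e^{−(α*−η)x} < e^{−ρ_J x} for all x > 0.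 -/
open MeasureTheory Filter Set

lemma aux_exp_quad {x : ℝ} (hx : 0 < x) : 1 + x + x ^ 2 / 2 < Real.exp x := by
  have h := Real.sum_le_exp_of_nonneg hx.le 4
  simp [Finset.sum_range_succ, Nat.factorial] at h
  nlinarith [pow_pos hx 3]

lemma part1 {Ω : Type*} [MeasurableSpace Ω] (P : Measure Ω) [IsProbabilityMeasure P]
    (Y : Ω → ℝ) (hYmeas : Measurable Y) (hYpos : P {ω | 0 < Y ω} = 1)
    (hYint : Integrable Y P) (hY2int : Integrable (fun ω => (Y ω) ^ 2) P)
    (lam β κ θ η : ℝ) (hlam : 0 < lam) (hβ : 0 < β) (hθ : 0 ≤ θ) (hη : 0 ≤ η)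
    (ρD : (ℝ → ℝ) → ℝ)
    (hρD : ∀ R : ℝ → ℝ, ρD R =
      2 * (-κ + lam * (θ * (∫ ω, R (Y ω) ∂P) + η * (∫ ω, Y ω * R (Y ω) ∂P)
            - η / 2 * (∫ ω, (R (Y ω)) ^ 2 ∂P)))
        / (lam * (∫ ω, (R (Y ω)) ^ 2 ∂P) + β ^ 2)) :
    (∀ R : ℝ → ℝ, Measurable R → (∀ y : ℝ, 0 ≤ y → 0 ≤ R y ∧ R y ≤ y) →
      0 < P {ω | 0 < R (Y ω)} →
      ∀ r : ℝ, 0 < r →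
        Integrable (fun ω => Real.exp (r * R (Y ω))) P →
        (-κ + lam * ((1 + θ) * (∫ ω, R (Y ω) ∂P)
              + η * (∫ ω, Y ω * R (Y ω) ∂P)
              - η / 2 * (∫ ω, (R (Y ω)) ^ 2 ∂P))) * r
          - β ^ 2 / 2 * r ^ 2
          - lam * ((∫ ω, Real.exp (r * R (Y ω)) ∂P) - 1) = 0 →
        r < ρD R) := by
  intro R hRmeas hR01 hRsupp r hr hExpInt heq
  -- a.e. positivity of Y
  have hae : ∀ᵐ ω ∂P, 0 < Y ω := by
    rw [ae_iff]
    have hms : MeasurableSet {ω | 0 < Y ω} := hYmeas measurableSet_Ioi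
    have := measure_compl hms (measure_ne_top P _)
    simp only [hYpos, measure_univ, tsub_self] at this
    simpa [compl_setOf] using this
  have haeR : ∀ᵐ ω ∂P, 0 ≤ R (Y ω) ∧ R (Y ω) ≤ Y ω :=
    hae.mono fun ω h => hR01 _ h.le
  have mR : Measurable fun ω => R (Y ω) := hRmeas.comp hYmeas
  have intR : Integrable (fun ω => R (Y ω)) P := by
    refine hYint.mono mR.aestronglyMeasurable (haeR.mono fun ω h => ?_)
    rw [Real.norm_eq_abs, Real.norm_eq_abs, abs_of_nonneg h.1]
    exact h.2.trans (le_abs_self _)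
  have intR2 : Integrable (fun ω => (R (Y ω)) ^ 2) P := by
    refine hY2int.mono (mR.pow_const 2).aestronglyMeasurable (haeR.mono fun ω h => ?_)
    rw [Real.norm_eq_abs, Real.norm_eq_abs, abs_of_nonneg (sq_nonneg _)]
    refine le_trans ?_ (le_abs_self _)
    exact pow_le_pow_left₀ h.1 h.2 2
  set h : Ω → ℝ := fun ω =>
    Real.exp (r * R (Y ω)) - 1 - r * R (Y ω) - r ^ 2 / 2 * (R (Y ω)) ^ 2 with hh
  have inth : Integrable h P := by
    exact ((hExpInt.sub (integrable_const 1)).sub (intR.const_mul r)).sub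
      (intR2.const_mul (r ^ 2 / 2))
  have hnn : 0 ≤ᵐ[P] h := by
    refine haeR.mono fun ω hw => ?_
    have hx : 0 ≤ r * R (Y ω) := mul_nonneg hr.le hw.1
    have := Real.quadratic_le_exp_of_nonneg hx
    simp only [hh, Pi.zero_apply]
    nlinarith
  have hpos : 0 < ∫ ω, h ω ∂P := by
    rw [integral_pos_iff_support_of_nonneg_ae hnn inth]
    refine lt_of_lt_of_le hRsupp (measure_mono fun ω hw => ?_)
    have hx : 0 < r * R (Y ω) := mul_pos hr hw
    have := aux_exp_quad hx
    simp only [Function.mem_support, hh]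
    nlinarith
  have hsplit : ∫ ω, h ω ∂P
      = (∫ ω, Real.exp (r * R (Y ω)) ∂P) - 1 - r * (∫ ω, R (Y ω) ∂P)
        - r ^ 2 / 2 * (∫ ω, (R (Y ω)) ^ 2 ∂P) := by
    simp only [hh]
    have i2 : Integrable (fun ω => Real.exp (r * R (Y ω)) - 1) P :=
      hExpInt.sub (integrable_const 1)
    have i3 : Integrable (fun ω => Real.exp (r * R (Y ω)) - 1 - r * R (Y ω)) P :=
      i2.sub (intR.const_mul r)
    have e1 : ∫ ω, (Real.exp (r * R (Y ω)) - 1 - r * R (Y ω)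
        - r ^ 2 / 2 * (R (Y ω)) ^ 2) ∂P
        = (∫ ω, (Real.exp (r * R (Y ω)) - 1 - r * R (Y ω)) ∂P)
          - ∫ ω, r ^ 2 / 2 * (R (Y ω)) ^ 2 ∂P :=
      integral_sub i3 (intR2.const_mul _)
    have e2 : ∫ ω, (Real.exp (r * R (Y ω)) - 1 - r * R (Y ω)) ∂P
        = (∫ ω, (Real.exp (r * R (Y ω)) - 1) ∂P) - ∫ ω, r * R (Y ω) ∂P :=
      integral_sub i2 (intR.const_mul r)
    have e3 : ∫ ω, (Real.exp (r * R (Y ω)) - 1) ∂P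
        = (∫ ω, Real.exp (r * R (Y ω)) ∂P) - ∫ ω, (1 : ℝ) ∂P :=
      integral_sub hExpInt (integrable_const 1)
    rw [e1, e2, e3, integral_const, integral_const_mul, integral_const_mul]
    simp
  rw [hsplit] at hpos
  have hER2 : 0 ≤ ∫ ω, (R (Y ω)) ^ 2 ∂P := integral_nonneg fun ω => sq_nonneg _
  have hD : 0 < lam * (∫ ω, (R (Y ω)) ^ 2 ∂P) + β ^ 2 := by positivity
  rw [hρD R, lt_div_iff₀ hD]
  set ER := ∫ ω, R (Y ω) ∂P
  set EYR := ∫ ω, Y ω * R (Y ω) ∂P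
  set ER2 := ∫ ω, (R (Y ω)) ^ 2 ∂P
  set EE := ∫ ω, Real.exp (r * R (Y ω)) ∂P
  have h1 : 0 < r * (2 * (-κ + lam * (θ * ER + η * EYR - η / 2 * ER2))
      - r * (lam * ER2 + β ^ 2)) := by nlinarith
  rcases mul_pos_iff.mp h1 with ⟨_, h2⟩ | ⟨h2, _⟩
  · nlinarith
  · exact absurd hr (not_lt.mpr h2.le)


set_option maxHeartbeats 2000000 in
lemma part2 {Ω : Type*} [MeasurableSpace Ω] (P : Measure Ω) [IsProbabilityMeasure P]
    (Y : Ω → ℝ) (hYmeas : Measurable Y) (hYpos : P {ω | 0 < Y ω} = 1)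
    (hfull : ∀ y : ℝ, 0 < y → 0 < P {ω | Y ω ≤ y} ∧ 0 < P {ω | y < Y ω})
    (hYint : Integrable Y P) (hY2int : Integrable (fun ω => (Y ω) ^ 2) P)
    (lam β θ η c μ : ℝ)
    (hlam : 0 < lam) (hβ : 0 < β) (hθ : 0 ≤ θ) (hη : 0 ≤ η) (hθη : 0 < θ + η)
    (S : ℝ → ℝ) (hS : ∀ y, S y = (P {ω | y < Y ω}).toReal)
    (Rhat : ℝ → ℝ → ℝ)
    (hRhat : ∀ r : ℝ, 0 < r → ∀ y : ℝ, 0 ≤ y →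
      (y < 1 / r * Real.log (1 + θ) → Rhat r y = y)
      ∧ (1 / r * Real.log (1 + θ) ≤ y →
          0 ≤ Rhat r y
          ∧ (1 + θ) + η * y - η * Rhat r y = Real.exp (r * Rhat r y)))
    (ρJ : ℝ) (hρJpos : 0 < ρJ)
    (hρJeq : c - lam * μ =
      lam * (∫ y in Ioi (0 : ℝ), (Real.exp (ρJ * Rhat ρJ y) - 1) * S y)
        + β ^ 2 / 2 * ρJ)
    (αs : ℝ) (hαs_gt : η < αs)
    (hαs_eq : c - lam * μ =
      (αs - η) * (lam * (∫ y in Ioi (0 : ℝ), min ((θ + η * y) / αs) y * S y) + β ^ 2 / 2)) :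
    ρJ < αs - η := by
  by_contra hcon
  push_neg at hcon   -- hcon : αs - η ≤ ρJ
  set a := αs - η with ha_def
  have ha : 0 < a := by simp [ha_def]; linarith
  have hαspos : 0 < αs := lt_of_le_of_lt hη hαs_gt
  have h1θ : (0:ℝ) < 1 + θ := by linarith
  set T := 1 / ρJ * Real.log (1 + θ) with hT_def
  have hT0 : 0 ≤ T := by
    have := Real.log_nonneg (by linarith : (1:ℝ) ≤ 1 + θ)
    positivity
  -- a.e. positivity of Y
  have hae : ∀ᵐ ω ∂P, 0 < Y ω := by
    rw [ae_iff]
    have hms : MeasurableSet {ω | 0 < Y ω} := hYmeas measurableSet_Ioi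
    have := measure_compl hms (measure_ne_top P _)
    simp only [hYpos, measure_univ, tsub_self] at this
    simpa [compl_setOf] using this
  -- S basic facts
  have hSmeas : Measurable S := by
    have : Antitone S := by
      intro y1 y2 h12
      rw [hS, hS]
      refine ENNReal.toReal_mono (measure_ne_top P _) (measure_mono fun ω hw => ?_)
      exact lt_of_le_of_lt h12 hw
    exact this.measurable
  have hSnn : ∀ y, 0 ≤ S y := fun y => by rw [hS]; exact ENNReal.toReal_nonneg
  have hSpos : ∀ y : ℝ, 0 < y → 0 < S y := fun y hy => by
    rw [hS]; exact ENNReal.toReal_pos (hfull y hy).2.ne' (measure_ne_top P _)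
  -- measurability of tail measure
  have hQmeas : Measurable fun t : ℝ => P {a | t < Y a} :=
    Antitone.measurable (fun _ _ hst => measure_mono (fun _ h => lt_of_le_of_lt hst h))
  -- S is integrable on Ioi 0
  have hYnn : 0 ≤ᵐ[P] Y := hae.mono fun ω h => h.le
  have intS : IntegrableOn S (Ioi 0) volume := by
    have hfin : ∫⁻ t in Ioi (0:ℝ), P {a | t < Y a} ≠ ⊤ := by
      rw [← lintegral_eq_lintegral_meas_lt P hYnn hYmeas.aemeasurable]
      refine ne_of_lt (lt_of_le_of_lt (lintegral_mono fun ω => ?_) hYint.2)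
      rw [Real.enorm_eq_ofReal_abs]
      exact ENNReal.ofReal_le_ofReal (le_abs_self _)
    have := integrable_toReal_of_lintegral_ne_top
      (hQmeas.aemeasurable (μ := volume.restrict (Ioi 0))) hfin
    refine this.congr (Eventually.of_forall fun t => ?_)
    rw [hS]
  -- y * S y is integrable on Ioi 0
  have intyS : IntegrableOn (fun y => y * S y) (Ioi 0) volume := by
    have key := lintegral_comp_eq_lintegral_meas_lt_mul P hYnn hYmeas.aemeasurable
      (g := fun t => t) (fun t _ => intervalIntegral.intervalIntegrable_id)
      ((ae_restrict_mem measurableSet_Ioi).mono fun t ht => (le_of_lt ht))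
    have hL : ∫⁻ ω, ENNReal.ofReal (∫ t in (0:ℝ)..Y ω, t) ∂P ≠ ⊤ := by
      refine ne_of_lt (lt_of_le_of_lt (lintegral_mono fun ω => ?_) hY2int.2)
      rw [integral_id, Real.enorm_eq_ofReal_abs]
      refine ENNReal.ofReal_le_ofReal ?_
      have := sq_nonneg (Y ω)
      rw [abs_of_nonneg (by positivity)]
      nlinarith
    rw [key] at hL
    have hm : Measurable fun t : ℝ => P {a | t < Y a} * ENNReal.ofReal t :=
      hQmeas.mul (measurable_id.ennreal_ofReal)
    have := integrable_toReal_of_lintegral_ne_top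
      (hm.aemeasurable (μ := volume.restrict (Ioi 0))) hL
    refine this.congr (((ae_restrict_mem measurableSet_Ioi).mono fun t ht => ?_))
    simp only [ENNReal.toReal_mul, ENNReal.toReal_ofReal (le_of_lt ht), hS, mul_comm]
  -- (θ + η y) S y is integrable on Ioi 0
  have intH : IntegrableOn (fun y => (θ + η * y) * S y) (Ioi 0) volume := by
    have : (fun y => (θ + η * y) * S y) = fun y => θ * S y + η * (y * S y) := by
      funext y; ring
    rw [this]
    exact (intS.const_mul θ).add (intyS.const_mul η)
  -- facts about Rhat at ρJ
  have key := fun (y : ℝ) (hy : 0 ≤ y) => hRhat ρJ hρJpos y hy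
  have hφ : ∀ x1 x2 : ℝ, x1 < x2 →
      Real.exp (ρJ * x1) + η * x1 < Real.exp (ρJ * x2) + η * x2 := by
    intro x1 x2 h
    have h1 := Real.exp_lt_exp.mpr (mul_lt_mul_of_pos_left h hρJpos)
    nlinarith [mul_le_mul_of_nonneg_left h.le hη]
  have hlogT : ∀ y : ℝ, y < T → Real.exp (ρJ * y) < 1 + θ := by
    intro y hyT
    have h2 := mul_lt_mul_of_pos_left hyT hρJpos
    rw [hT_def, show ρJ * (1 / ρJ * Real.log (1 + θ)) = Real.log (1 + θ) by
      field_simp] at h2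
    calc Real.exp (ρJ * y) < Real.exp (Real.log (1 + θ)) := Real.exp_lt_exp.mpr h2
      _ = 1 + θ := Real.exp_log h1θ
  have hlogT' : ∀ y : ℝ, T ≤ y → 1 + θ ≤ Real.exp (ρJ * y) := by
    intro y hyT
    have h2 := mul_le_mul_of_nonneg_left hyT hρJpos.le
    rw [hT_def, show ρJ * (1 / ρJ * Real.log (1 + θ)) = Real.log (1 + θ) by
      field_simp] at h2
    calc (1:ℝ) + θ = Real.exp (Real.log (1 + θ)) := (Real.exp_log h1θ).symm
      _ ≤ Real.exp (ρJ * y) := Real.exp_le_exp.mpr h2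
  have hmono : ∀ y1 y2 : ℝ, 0 ≤ y1 → y1 ≤ y2 → Rhat ρJ y1 ≤ Rhat ρJ y2 := by
    intro y1 y2 hy1 h12
    have hy2 : 0 ≤ y2 := hy1.trans h12
    by_cases hc1 : y1 < T
    · have e1 : Rhat ρJ y1 = y1 := (key y1 hy1).1 hc1
      by_cases hc2 : y2 < T
      · rw [e1, (key y2 hy2).1 hc2]; exact h12
      · obtain ⟨h0, he2⟩ := (key y2 hy2).2 (not_lt.mp hc2)
        rw [e1]
        by_contra hlt; push_neg at hlt
        have hφlt := hφ _ _ hlt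
        have hexp := hlogT y1 hc1
        have hηy := mul_le_mul_of_nonneg_left h12 hη
        linarith
    · obtain ⟨h01, he1⟩ := (key y1 hy1).2 (not_lt.mp hc1)
      obtain ⟨h02, he2⟩ := (key y2 hy2).2 (le_trans (not_lt.mp hc1) h12)
      by_contra hlt; push_neg at hlt
      have hφlt := hφ _ _ hlt
      have hηy := mul_le_mul_of_nonneg_left h12 hη
      linarith
  have hR'mono : Monotone fun y => Rhat ρJ (max y 0) :=
    fun y1 y2 h => hmono _ _ (le_max_right _ _) (max_le_max h le_rfl)
  have hR'meas : Measurable fun y => Rhat ρJ (max y 0) := hR'mono.measurable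
  -- upper bound hub
  have hub : ∀ y : ℝ, 0 ≤ y →
      0 ≤ Rhat ρJ y ∧ Real.exp (ρJ * Rhat ρJ y) ≤ 1 + θ + η * y := by
    intro y hy
    by_cases hc : y < T
    · rw [(key y hy).1 hc]
      exact ⟨hy, by nlinarith [hlogT y hc, mul_nonneg hη hy]⟩
    · obtain ⟨h0, he⟩ := (key y hy).2 (not_lt.mp hc)
      exact ⟨h0, by nlinarith [mul_nonneg hη h0]⟩
  -- pointwise key inequality
  have hkey : ∀ y : ℝ, 0 < y →
      (a * min ((θ + η * y) / αs) y ≤ Real.exp (ρJ * Rhat ρJ y) - 1)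
      ∧ ((y < T ∨ θ = 0) →
          a * min ((θ + η * y) / αs) y < Real.exp (ρJ * Rhat ρJ y) - 1) := by
    intro y hy
    have hθηy : 0 < θ + η * y := by
      rcases lt_or_eq_of_le hθ with h | h
      · nlinarith
      · have hη' : 0 < η := by linarith
        nlinarith
    have hminle_y : min ((θ + η * y) / αs) y ≤ y := min_le_right _ _
    have hmin0 : 0 ≤ min ((θ + η * y) / αs) y :=
      le_min (by positivity) hy.le
    by_cases hc : y < T
    · have e1 : Rhat ρJ y = y := (key y hy.le).1 hc
      have hstrict : a * min ((θ + η * y) / αs) y < Real.exp (ρJ * y) - 1 := by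
        have h2 : ρJ * y + 1 < Real.exp (ρJ * y) :=
          Real.add_one_lt_exp (ne_of_gt (mul_pos hρJpos hy))
        nlinarith [mul_le_mul_of_nonneg_left hminle_y ha.le]
      rw [e1]; exact ⟨hstrict.le, fun _ => hstrict⟩
    · push_neg at hc
      obtain ⟨h0, he⟩ := (key y hy.le).2 hc
      have hRpos : 0 < Rhat ρJ y := by
        rcases h0.lt_or_eq with h | h
        · exact h
        · exfalso; rw [← h] at he; simp at he; nlinarith
      have hE : Real.exp (ρJ * Rhat ρJ y) - 1 = θ + η * y - η * Rhat ρJ y := by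
        linarith
      have hRlt : (ρJ + η) * Rhat ρJ y < θ + η * y := by
        have := Real.add_one_lt_exp (ne_of_gt (mul_pos hρJpos hRpos))
        nlinarith
      have hRy : Rhat ρJ y ≤ y := by
        by_contra hlt; push_neg at hlt
        have hφlt := hφ y (Rhat ρJ y) hlt
        have h1 := hlogT' y hc
        linarith
      have hαs_a : αs = a + η := by rw [ha_def]; ring
      rcases min_cases ((θ + η * y) / αs) y with ⟨hmeq, hmle⟩ | ⟨hmeq, hmlt⟩
      · set q := (θ + η * y) / αs with hq_def
        have hqαs : q * αs = θ + η * y := div_mul_cancel₀ _ (ne_of_gt hαspos)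
        have hq0 : 0 < q := div_pos hθηy hαspos
        have hRq : Rhat ρJ y < q := by nlinarith
        constructor
        · rw [hmeq, hE]
          nlinarith [mul_le_mul_of_nonneg_left hRq.le hη]
        · intro hor
          rcases hor with h | h
          · linarith
          · have hη' : 0 < η := by rw [h] at hθη; linarith
            rw [hmeq, hE]
            nlinarith [mul_lt_mul_of_pos_left hRq hη']
      · have hay : a * y ≤ θ := by
          nlinarith [mul_lt_mul_of_pos_right hmlt hαspos,
            div_mul_cancel₀ (θ + η * y) (ne_of_gt hαspos)]
        constructor
        · rw [hmeq, hE]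
          nlinarith [mul_le_mul_of_nonneg_left hRy hη]
        · intro hor
          rcases hor with h | h
          · linarith
          · exfalso; rw [h] at hay; nlinarith
  -- the two integrands
  set F' : ℝ → ℝ := fun y => (Real.exp (ρJ * Rhat ρJ (max y 0)) - 1) * S y with hF'
  set G : ℝ → ℝ := fun y => min ((θ + η * y) / αs) y * S y with hG
  have hF'meas : Measurable F' :=
    ((Real.measurable_exp.comp (hR'meas.const_mul ρJ)).sub measurable_const).mul hSmeas
  have hGmeas : Measurable G :=
    (Measurable.min ((measurable_const.add (measurable_id.const_mul η)).div_const αs)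
      measurable_id).mul hSmeas
  have hF'nn : ∀ y : ℝ, 0 < y → 0 ≤ F' y := by
    intro y hy
    simp only [hF', max_eq_left hy.le]
    have := Real.one_le_exp (mul_nonneg hρJpos.le (hub y hy.le).1)
    have := hSnn y
    nlinarith
  have hF'le : ∀ y : ℝ, 0 < y → F' y ≤ (θ + η * y) * S y := by
    intro y hy
    simp only [hF', max_eq_left hy.le]
    have h1 := (hub y hy.le).2
    exact mul_le_mul_of_nonneg_right (by linarith) (hSnn y)
  have intF' : IntegrableOn F' (Ioi 0) volume := by
    refine Integrable.mono intH hF'meas.aestronglyMeasurable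
      (((ae_restrict_mem measurableSet_Ioi).mono fun y hy => ?_))
    rw [Real.norm_eq_abs, Real.norm_eq_abs, abs_of_nonneg (hF'nn y hy)]
    exact (hF'le y hy).trans (le_abs_self _)
  have hGnn : ∀ y : ℝ, 0 < y → 0 ≤ G y := by
    intro y hy
    have hθηy : 0 ≤ θ + η * y := by nlinarith [mul_nonneg hη hy.le]
    exact mul_nonneg (le_min (by positivity) hy.le) (hSnn y)
  have intG : IntegrableOn G (Ioi 0) volume := by
    refine Integrable.mono intyS hGmeas.aestronglyMeasurable
      (((ae_restrict_mem measurableSet_Ioi).mono fun y hy => ?_))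
    rw [Real.norm_eq_abs, Real.norm_eq_abs, abs_of_nonneg (hGnn y hy)]
    refine le_trans ?_ (le_abs_self _)
    exact mul_le_mul_of_nonneg_right (min_le_right _ _) (hSnn y)
  -- strict comparison of integrals
  set D : ℝ → ℝ := fun y => F' y - a * G y with hD
  have intD : IntegrableOn D (Ioi 0) volume := intF'.sub (intG.const_mul a)
  have hDkey : ∀ y : ℝ, 0 < y → a * G y ≤ F' y := by
    intro y hy
    have h1 := (hkey y hy).1
    simp only [hF', hG, max_eq_left hy.le]
    calc a * (min ((θ + η * y) / αs) y * S y)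
        = (a * min ((θ + η * y) / αs) y) * S y := by ring
      _ ≤ (Real.exp (ρJ * Rhat ρJ y) - 1) * S y :=
          mul_le_mul_of_nonneg_right h1 (hSnn y)
  have hDnn : 0 ≤ᵐ[volume.restrict (Ioi (0:ℝ))] D :=
    (ae_restrict_mem measurableSet_Ioi).mono fun y hy => by
      simp only [hD, Pi.zero_apply]; linarith [hDkey y hy]
  have hDstrict : ∀ y : ℝ, 0 < y → (y < T ∨ θ = 0) → 0 < D y := by
    intro y hy hor
    have h1 := (hkey y hy).2 hor
    have hs := hSpos y hy
    simp only [hD, hF', hG, max_eq_left hy.le]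
    nlinarith [mul_lt_mul_of_pos_right h1 hs]
  have hIntDpos : 0 < ∫ y in Ioi (0:ℝ), D y := by
    rw [setIntegral_pos_iff_support_of_nonneg_ae hDnn intD]
    rcases lt_or_eq_of_le hθ with hθpos | hθ0
    · have hTpos : 0 < T := by
        rw [hT_def]
        have := Real.log_pos (by linarith : (1:ℝ) < 1 + θ)
        positivity
      have hsub : Ioo (0:ℝ) T ⊆ Function.support D ∩ Ioi 0 := fun y hy =>
        ⟨ne_of_gt (hDstrict y hy.1 (Or.inl hy.2)), hy.1⟩
      refine lt_of_lt_of_le ?_ (measure_mono hsub)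
      rw [Real.volume_Ioo]
      exact ENNReal.ofReal_pos.mpr (by linarith)
    · have hsub : Ioi (0:ℝ) ⊆ Function.support D ∩ Ioi 0 := fun y hy =>
        ⟨ne_of_gt (hDstrict y hy (Or.inr hθ0.symm)), hy⟩
      refine lt_of_lt_of_le ?_ (measure_mono hsub)
      rw [Real.volume_Ioi]; exact ENNReal.zero_lt_top
  have hsplitD : ∫ y in Ioi (0:ℝ), D y
      = (∫ y in Ioi (0:ℝ), F' y) - a * ∫ y in Ioi (0:ℝ), G y := by
    simp only [hD]
    rw [integral_sub intF' (intG.const_mul a), integral_const_mul]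
  have hIF : ∫ y in Ioi (0:ℝ), (Real.exp (ρJ * Rhat ρJ y) - 1) * S y
      = ∫ y in Ioi (0:ℝ), F' y := by
    refine setIntegral_congr_fun measurableSet_Ioi fun y hy => ?_
    simp only [hF', max_eq_left (le_of_lt (show (0:ℝ) < y from hy))]
  rw [hIF] at hρJeq
  have hlt : a * (∫ y in Ioi (0:ℝ), G y) < ∫ y in Ioi (0:ℝ), F' y := by
    rw [hsplitD] at hIntDpos; linarith
  have hGint_eq : (∫ y in Ioi (0:ℝ), min ((θ + η * y) / αs) y * S y)
      = ∫ y in Ioi (0:ℝ), G y := rfl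
  rw [hGint_eq] at hαs_eq
  have h1 : lam * (a * ∫ y in Ioi (0:ℝ), G y) < lam * ∫ y in Ioi (0:ℝ), F' y :=
    mul_lt_mul_of_pos_left hlt hlam
  have h2 : β ^ 2 * a ≤ β ^ 2 * ρJ := mul_le_mul_of_nonneg_left hcon (sq_nonneg β)
  set IG := ∫ y in Ioi (0:ℝ), G y with hIG_def
  set IF := ∫ y in Ioi (0:ℝ), F' y with hIF_def
  clear_value a IG IF
  clear hIG_def hIF_def hIF hsplitD hIntDpos hDstrict hDnn hDkey intD intG intF'
  nlinarith [h1, h2, hρJeq, hαs_eq]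

theorem stmt_15
    {Ω : Type*} [MeasurableSpace Ω] (P : Measure Ω) [IsProbabilityMeasure P]
    (Y : Ω → ℝ) (hYmeas : Measurable Y)
    (hYpos : P {ω | 0 < Y ω} = 1)
    (hfull : ∀ y : ℝ, 0 < y → 0 < P {ω | Y ω ≤ y} ∧ 0 < P {ω | y < Y ω})
    (μ σ2 : ℝ) (hμ : μ = ∫ ω, Y ω ∂P) (hσ2 : σ2 = ∫ ω, (Y ω) ^ 2 ∂P)
    (hYint : Integrable Y P) (hY2int : Integrable (fun ω => (Y ω) ^ 2) P)
    (hmgf : ∃ ε : ℝ, 0 < ε ∧ ∀ r : ℝ, |r| < ε →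
      Integrable (fun ω => Real.exp (r * Y ω)) P)
    (lam β θ η c κ : ℝ)
    (hlam : 0 < lam) (hβ : 0 < β) (hθ : 0 ≤ θ) (hη : 0 ≤ η) (hθη : 0 < θ + η)
    (hc1 : lam * μ < c) (hc2 : c < (1 + θ) * lam * μ + η / 2 * lam * σ2)
    (hκ : κ = (1 + θ) * lam * μ + η / 2 * lam * σ2 - c)
    (S : ℝ → ℝ) (hS : ∀ y, S y = (P {ω | y < Y ω}).toReal)
    (ρD : (ℝ → ℝ) → ℝ)
    (hρD : ∀ R : ℝ → ℝ, ρD R =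
      2 * (-κ + lam * (θ * (∫ ω, R (Y ω) ∂P) + η * (∫ ω, Y ω * R (Y ω) ∂P)
            - η / 2 * (∫ ω, (R (Y ω)) ^ 2 ∂P)))
        / (lam * (∫ ω, (R (Y ω)) ^ 2 ∂P) + β ^ 2))
    (Rhat : ℝ → ℝ → ℝ)
    (hRhat : ∀ r : ℝ, 0 < r → ∀ y : ℝ, 0 ≤ y →
      (y < 1 / r * Real.log (1 + θ) → Rhat r y = y)
      ∧ (1 / r * Real.log (1 + θ) ≤ y →
          0 ≤ Rhat r y
          ∧ (1 + θ) + η * y - η * Rhat r y = Real.exp (r * Rhat r y)))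
    (ρJ : ℝ) (hρJpos : 0 < ρJ)
    (hρJeq : c - lam * μ =
      lam * (∫ y in Ioi (0 : ℝ), (Real.exp (ρJ * Rhat ρJ y) - 1) * S y)
        + β ^ 2 / 2 * ρJ)
    (hρJuniq : ∀ r : ℝ, 0 < r →
      c - lam * μ =
        lam * (∫ y in Ioi (0 : ℝ), (Real.exp (r * Rhat r y) - 1) * S y)
          + β ^ 2 / 2 * r →
      r = ρJ)
    (αs : ℝ) (hαs_gt : η < αs)
    (hαs_eq : c - lam * μ =
      (αs - η) * (lam * (∫ y in Ioi (0 : ℝ), min ((θ + η * y) / αs) y * S y) + β ^ 2 / 2))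
    (hαs_uniq : ∀ α : ℝ, η < α →
      c - lam * μ =
        (α - η) * (lam * (∫ y in Ioi (0 : ℝ), min ((θ + η * y) / α) y * S y) + β ^ 2 / 2) →
      α = αs) :
    (∀ R : ℝ → ℝ, Measurable R → (∀ y : ℝ, 0 ≤ y → 0 ≤ R y ∧ R y ≤ y) →
      0 < P {ω | 0 < R (Y ω)} →
      ∀ r : ℝ, 0 < r →
        Integrable (fun ω => Real.exp (r * R (Y ω))) P →
        (-κ + lam * ((1 + θ) * (∫ ω, R (Y ω) ∂P)
              + η * (∫ ω, Y ω * R (Y ω) ∂P)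
              - η / 2 * (∫ ω, (R (Y ω)) ^ 2 ∂P))) * r
          - β ^ 2 / 2 * r ^ 2
          - lam * ((∫ ω, Real.exp (r * R (Y ω)) ∂P) - 1) = 0 →
        r < ρD R)
    ∧ ρJ < αs - η
    ∧ ∀ x : ℝ, 0 < x →
        Real.exp (-(αs - η) * x) < Real.exp (-ρJ * x) := by
  have hp2 : ρJ < αs - η :=
    part2 P Y hYmeas hYpos hfull hYint hY2int lam β θ η c μ hlam hβ hθ hη hθη
      S hS Rhat hRhat ρJ hρJpos hρJeq αs hαs_gt hαs_eq
  refine ⟨part1 P Y hYmeas hYpos hYint hY2int lam β κ θ η hlam hβ hθ hη ρD hρD, hp2, ?_⟩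
  intro x hx
  apply Real.exp_lt_exp.mpr
  nlinarith [mul_lt_mul_of_pos_right hp2 hx]
end

section
/- Fix θ ≥ 0, η ≥ 0 with θ + η > 0, y > 0, ρ > 0, and a sequence of positive reals (r_n) with r_n → ρ. For each positive integer n set θ_n = θ/√n and define R̂_n(z) = z if z < (1/r_n)·ln(1+θ_n), and otherwise let R̂_n(z) be the unique nonnegative solution R of (1+θ_n) + ηz − ηR = e^{r_n·R}. Then lim_{n→∞} √n·R̂_n(y/√n) = min( (θ + ηy)/(ρ + η), y ). (Applied with r_n the maximum adjustment coefficients of the scaled classical risk model and ρ = ρ_D, this says the scaled optimal retentions converge pointwise to the optimal retention R_D of the diffusion approximation.) -/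
open Filter

private lemma aux_exp_ub {x : ℝ} (hx : 0 ≤ x) : Real.exp x ≤ 1 + x * Real.exp x := by
  have h := Real.add_one_le_exp (-x)
  rw [Real.exp_neg] at h
  have hp := Real.exp_pos x
  have h2 : (1 - x) * Real.exp x ≤ 1 := by
    have h3 := mul_le_mul_of_nonneg_right h hp.le
    rw [inv_mul_cancel₀ hp.ne'] at h3
    have : 1 + -x = 1 - x := by ring
    linarith [h3]
  nlinarith

private lemma aux_log_lb {a : ℝ} (ha : 0 ≤ a) : a / (1 + a) ≤ Real.log (1 + a) := by
  have h1 : (0:ℝ) < 1 + a := by linarith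
  have h := Real.log_le_sub_one_of_pos (show (0:ℝ) < (1+a)⁻¹ by positivity)
  rw [Real.log_inv] at h
  have h4 : a/(1+a) = 1 - (1+a)⁻¹ := by field_simp; ring
  linarith

set_option maxHeartbeats 1000000 in
theorem stmt_17 (θ η : ℝ) (hθ : 0 ≤ θ) (hη : 0 ≤ η) (hθη : 0 < θ + η)
    (y : ℝ) (hy : 0 < y) (ρ : ℝ) (hρ : 0 < ρ)
    (r : ℕ → ℝ) (hrpos : ∀ n, 0 < r n)
    (hrlim : Tendsto r atTop (nhds ρ))
    (Rhat : ℕ → ℝ → ℝ)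
    (hRhat : ∀ n : ℕ, 0 < n → ∀ z : ℝ,
      (z < 1 / r n * Real.log (1 + θ / Real.sqrt n) → Rhat n z = z)
      ∧ (1 / r n * Real.log (1 + θ / Real.sqrt n) ≤ z →
          0 ≤ Rhat n z
          ∧ (1 + θ / Real.sqrt n) + η * z - η * Rhat n z
              = Real.exp (r n * Rhat n z))) :
    Tendsto (fun n : ℕ => Real.sqrt n * Rhat n (y / Real.sqrt n)) atTop
      (nhds (min ((θ + η * y) / (ρ + η)) y)) := by
  have hθy : 0 < θ + η * y := by
    rcases eq_or_lt_of_le hθ with h | h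
    · have hη' : 0 < η := by linarith
      nlinarith
    · nlinarith
  have hρη : 0 < ρ + η := by linarith
  have hs : ∀ n : ℕ, 0 < n → 0 < Real.sqrt n := by
    intro n hn
    exact Real.sqrt_pos.mpr (by exact_mod_cast hn)
  have hsqrt : Tendsto (fun n : ℕ => Real.sqrt n) atTop atTop := by
    have h1 : Tendsto (fun x : ℝ => x ^ (1/2 : ℝ)) atTop atTop :=
      tendsto_rpow_atTop (by norm_num)
    have h2 : Tendsto (fun n : ℕ => ((n : ℝ) ^ (1/2 : ℝ))) atTop atTop :=
      h1.comp tendsto_natCast_atTop_atTop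
    exact h2.congr fun n => (Real.sqrt_eq_rpow _).symm
  have hdiv0 : Tendsto (fun n : ℕ => (θ + η * y) / Real.sqrt n) atTop (nhds 0) :=
    tendsto_const_nhds.div_atTop hsqrt
  have hθdiv0 : Tendsto (fun n : ℕ => θ / Real.sqrt n) atTop (nhds 0) :=
    tendsto_const_nhds.div_atTop hsqrt
  have hLp : Tendsto (fun n => (θ + η * y) / (r n + η)) atTop
      (nhds ((θ + η * y) / (ρ + η))) :=
    tendsto_const_nhds.div (hrlim.add tendsto_const_nhds) hρη.ne'
  have hLm : Tendsto (fun n => (θ + η * y) / (r n * (1 + (θ + η * y) / Real.sqrt n) + η))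
      atTop (nhds ((θ + η * y) / (ρ + η))) := by
    have h1 : Tendsto (fun n => r n * (1 + (θ + η * y) / Real.sqrt n) + η) atTop
        (nhds (ρ + η)) := by
      have h2 := (hrlim.mul ((tendsto_const_nhds : Tendsto (fun _ : ℕ => (1:ℝ)) atTop (nhds 1)).add hdiv0)).add
        (tendsto_const_nhds : Tendsto (fun _ : ℕ => η) atTop (nhds η))
      simpa using h2
    exact tendsto_const_nhds.div h1 hρη.ne'
  -- key two-sided bound in the equation branch
  have key : ∀ n : ℕ, 0 < n →
      1 / r n * Real.log (1 + θ / Real.sqrt n) ≤ y / Real.sqrt n →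
      (θ + η * y) / (r n * (1 + (θ + η * y) / Real.sqrt n) + η)
          ≤ Real.sqrt n * Rhat n (y / Real.sqrt n) ∧
      Real.sqrt n * Rhat n (y / Real.sqrt n) ≤ (θ + η * y) / (r n + η) := by
    intro n hn hbr
    have hsn := hs n hn
    obtain ⟨hR0, heq⟩ := (hRhat n hn (y / Real.sqrt n)).2 hbr
    set s := Real.sqrt n with hsdef
    set R := Rhat n (y / s) with hRdef
    have hr := hrpos n
    have h1θ : (0:ℝ) < 1 + θ / s := by positivity
    have hRz : R ≤ y / s := by
      by_contra hc
      push_neg at hc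
      have hE : Real.exp (r n * R) ≤ 1 + θ / s := by nlinarith [heq]
      have hlog : r n * R ≤ Real.log (1 + θ / s) :=
        (Real.le_log_iff_exp_le h1θ).mpr hE
      have h5 : Real.log (1 + θ / s) ≤ r n * (y / s) := by
        have h6 := mul_le_mul_of_nonneg_left hbr hr.le
        rw [← mul_assoc, mul_one_div_cancel hr.ne', one_mul] at h6
        exact h6
      nlinarith
    have hsy : s * (y / s) = y := by field_simp
    have heq' : s * (Real.exp (r n * R) - 1) = θ + η * y - η * (s * R) := by
      have h6 : Real.exp (r n * R) = 1 + θ / s + η * (y / s) - η * R := by linarith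
      rw [h6]
      field_simp
      ring
    have hE1 : 1 + r n * R ≤ Real.exp (r n * R) := by
      have := Real.add_one_le_exp (r n * R); linarith
    have hxnn : 0 ≤ r n * R := mul_nonneg hr.le hR0
    have hE2 : Real.exp (r n * R) ≤ 1 + (r n * R) * Real.exp (r n * R) := aux_exp_ub hxnn
    have hsplit : (θ + η * y) / s = θ / s + η * (y / s) := by
      field_simp
    have hEub : Real.exp (r n * R) ≤ 1 + (θ + η * y) / s := by
      have h6 : Real.exp (r n * R) = 1 + θ / s + η * (y / s) - η * R := by linarith
      rw [h6, hsplit]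
      nlinarith [mul_nonneg hη hR0]
    have hu0 : 0 ≤ s * R := mul_nonneg hsn.le hR0
    constructor
    · have hD : 0 < r n * (1 + (θ + η * y) / s) + η := by
        have h7 : (0:ℝ) < 1 + (θ + η * y) / s := by positivity
        nlinarith
      rw [div_le_iff₀ hD]
      have hA := mul_le_mul_of_nonneg_left hE2 hsn.le
      have hB := mul_le_mul_of_nonneg_left hEub (mul_nonneg hr.le hu0)
      have e1 : s * (1 + (r n * R) * Real.exp (r n * R))
          = s + r n * (s * R) * Real.exp (r n * R) := by ring
      have hA' : s * Real.exp (r n * R)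
          ≤ s + r n * (s * R) * Real.exp (r n * R) := le_trans hA (le_of_eq e1)
      have e2 : r n * (s * R) * (1 + (θ + η * y) / s)
          = s * R * (r n * (1 + (θ + η * y) / s)) := by ring
      linarith [hA', hB, heq', e2]
    · rw [le_div_iff₀ (by linarith : (0:ℝ) < r n + η)]
      have hA := mul_le_mul_of_nonneg_left hE1 hsn.le
      have e2 : s * (1 + r n * R) = s + r n * (s * R) := by ring
      have hA' : s + r n * (s * R) ≤ s * Real.exp (r n * R) :=
        le_trans (le_of_eq e2.symm) hA
      nlinarith [hA', heq']
  rcases lt_trichotomy θ (ρ * y) with hcase | hcase | hcase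
  · -- θ < ρ y : eventually in the equation branch
    have hmin : min ((θ + η * y) / (ρ + η)) y = (θ + η * y) / (ρ + η) :=
      min_eq_left (by rw [div_le_iff₀ hρη]; nlinarith)
    rw [hmin]
    have hev : ∀ᶠ n in atTop, (0:ℝ) < r n * y - θ := by
      have h1 : Tendsto (fun n => r n * y - θ) atTop (nhds (ρ * y - θ)) :=
        (hrlim.mul_const y).sub tendsto_const_nhds
      exact h1.eventually (eventually_gt_nhds (by nlinarith))
    have hevk : ∀ᶠ n in atTop,
        (θ + η * y) / (r n * (1 + (θ + η * y) / Real.sqrt n) + η)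
            ≤ Real.sqrt n * Rhat n (y / Real.sqrt n) ∧
        Real.sqrt n * Rhat n (y / Real.sqrt n) ≤ (θ + η * y) / (r n + η) := by
      filter_upwards [hev, eventually_gt_atTop 0] with n h1 hn
      have hsn := hs n hn
      have hr := hrpos n
      have hbr : 1 / r n * Real.log (1 + θ / Real.sqrt n) ≤ y / Real.sqrt n := by
        have hl : Real.log (1 + θ / Real.sqrt n) ≤ θ / Real.sqrt n := by
          have := Real.log_le_sub_one_of_pos
            (show (0:ℝ) < 1 + θ / Real.sqrt n by positivity)
          linarith
        rw [div_mul_eq_mul_div, one_mul, div_le_div_iff₀ hr hsn]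
        calc Real.log (1 + θ / Real.sqrt n) * Real.sqrt n
            ≤ (θ / Real.sqrt n) * Real.sqrt n := by nlinarith
          _ = θ := by field_simp
          _ ≤ y * r n := by nlinarith
      exact key n hn hbr
    exact tendsto_of_tendsto_of_tendsto_of_le_of_le' hLm hLp
      (hevk.mono fun n h => h.1) (hevk.mono fun n h => h.2)
  · -- θ = ρ y
    have hLy : (θ + η * y) / (ρ + η) = y := by
      rw [div_eq_iff hρη.ne']; nlinarith
    rw [hLy, min_self]
    have hgle : ∀ᶠ n in atTop,
        min y ((θ + η * y) / (r n * (1 + (θ + η * y) / Real.sqrt n) + η))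
          ≤ Real.sqrt n * Rhat n (y / Real.sqrt n) ∧
        Real.sqrt n * Rhat n (y / Real.sqrt n) ≤ max y ((θ + η * y) / (r n + η)) := by
      filter_upwards [eventually_gt_atTop 0] with n hn
      by_cases hb : 1 / r n * Real.log (1 + θ / Real.sqrt n) ≤ y / Real.sqrt n
      · obtain ⟨h1, h2⟩ := key n hn hb
        exact ⟨le_trans (min_le_right _ _) h1, le_trans h2 (le_max_right _ _)⟩
      · push_neg at hb
        have heqz := (hRhat n hn (y / Real.sqrt n)).1 hb
        have hval : Real.sqrt n * Rhat n (y / Real.sqrt n) = y := by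
          rw [heqz]; field_simp
        rw [hval]
        exact ⟨min_le_left _ _, le_max_left _ _⟩
    have hming : Tendsto
        (fun n => min y ((θ + η * y) / (r n * (1 + (θ + η * y) / Real.sqrt n) + η)))
        atTop (nhds y) := by
      have := (tendsto_const_nhds : Tendsto (fun _ : ℕ => y) atTop (nhds y)).min hLm
      rwa [hLy, min_self] at this
    have hmaxg : Tendsto (fun n => max y ((θ + η * y) / (r n + η))) atTop (nhds y) := by
      have := (tendsto_const_nhds : Tendsto (fun _ : ℕ => y) atTop (nhds y)).max hLp
      rwa [hLy, max_self] at this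
    exact tendsto_of_tendsto_of_tendsto_of_le_of_le' hming hmaxg
      (hgle.mono fun n h => h.1) (hgle.mono fun n h => h.2)
  · -- θ > ρ y : eventually Rhat = z
    have hmin : min ((θ + η * y) / (ρ + η)) y = y :=
      min_eq_right (by rw [le_div_iff₀ hρη]; nlinarith)
    rw [hmin]
    have htd : Tendsto (fun n : ℕ => θ / (1 + θ / Real.sqrt n) - r n * y) atTop
        (nhds (θ - ρ * y)) := by
      have h1 : Tendsto (fun n : ℕ => θ / (1 + θ / Real.sqrt n)) atTop (nhds θ) := by
        have h2 := (tendsto_const_nhds : Tendsto (fun _ : ℕ => θ) atTop (nhds θ)).div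
          (tendsto_const_nhds.add hθdiv0) (by norm_num : (1:ℝ) + 0 ≠ 0)
        rw [add_zero, div_one] at h2
        exact h2
      exact h1.sub (hrlim.mul_const y)
    have hev := htd.eventually (eventually_gt_nhds (by nlinarith : (0:ℝ) < θ - ρ * y))
    have heq : (fun _ : ℕ => y) =ᶠ[atTop]
        (fun n : ℕ => Real.sqrt n * Rhat n (y / Real.sqrt n)) := by
      filter_upwards [hev, eventually_gt_atTop 0] with n hgt hn
      have hsn := hs n hn
      have hr := hrpos n
      have h1θ : (0:ℝ) < 1 + θ / Real.sqrt n := by positivity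
      have hlog : θ / Real.sqrt n / (1 + θ / Real.sqrt n)
          ≤ Real.log (1 + θ / Real.sqrt n) := aux_log_lb (by positivity)
      have hkey : r n * y < Real.sqrt n * Real.log (1 + θ / Real.sqrt n) := by
        have h7 : θ / (1 + θ / Real.sqrt n)
            = Real.sqrt n * (θ / Real.sqrt n / (1 + θ / Real.sqrt n)) := by
          field_simp
        calc r n * y < θ / (1 + θ / Real.sqrt n) := by linarith
          _ = Real.sqrt n * (θ / Real.sqrt n / (1 + θ / Real.sqrt n)) := h7
          _ ≤ Real.sqrt n * Real.log (1 + θ / Real.sqrt n) :=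
              mul_le_mul_of_nonneg_left hlog hsn.le
      have hbr : y / Real.sqrt n < 1 / r n * Real.log (1 + θ / Real.sqrt n) := by
        rw [div_mul_eq_mul_div, one_mul, div_lt_div_iff₀ hsn hr]
        nlinarith [hkey]
      have heqz := (hRhat n hn (y / Real.sqrt n)).1 hbr
      rw [heqz]
      field_simp
    exact Tendsto.congr' heq tendsto_const_nhds
end

section
/- Let a and ε be real numbers with 0 < ε < a. Then for every x ≥ 0, e^{−(a−ε)x} − e^{−ax} ≤ (1 − ε/a)^{a/ε} · ε/(a−ε), where (1 − ε/a)^{a/ε} denotes the real power e^{(a/ε)·ln(1 − ε/a)}. -/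
lemma aux_tq (q t : ℝ) (hq : 0 < q) (ht0 : 0 < t) (ht1 : t ≤ 1) :
    t ^ q * (1 - t) ≤ (q / (q + 1)) ^ q * (1 / (q + 1)) := by
  have hq1 : (0:ℝ) < q + 1 := by linarith
  set w₁ : ℝ := q / (q + 1) with hw1def
  set w₂ : ℝ := 1 / (q + 1) with hw2def
  set p₁ : ℝ := t * (q + 1) / q with hp1def
  set p₂ : ℝ := (1 - t) * (q + 1) with hp2def
  have hw₁ : 0 ≤ w₁ := by positivity
  have hw₂ : 0 ≤ w₂ := by positivity
  have hp₁ : 0 ≤ p₁ := by positivity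
  have hp₂ : 0 ≤ p₂ := by
    have : 0 ≤ 1 - t := by linarith
    positivity
  have hw : w₁ + w₂ = 1 := by rw [hw1def, hw2def]; field_simp
  have key := Real.geom_mean_le_arith_mean2_weighted hw₁ hw₂ hp₁ hp₂ hw
  have hsum : w₁ * p₁ + w₂ * p₂ = 1 := by
    rw [hw1def, hw2def, hp1def, hp2def]
    field_simp
    ring
  rw [hsum] at key
  have key2 : (p₁ ^ w₁ * p₂ ^ w₂) ^ (q + 1) ≤ 1 := by
    calc (p₁ ^ w₁ * p₂ ^ w₂) ^ (q + 1) ≤ 1 ^ (q + 1) :=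
          Real.rpow_le_rpow (by positivity) key (le_of_lt hq1)
      _ = 1 := Real.one_rpow _
  have expand : (p₁ ^ w₁ * p₂ ^ w₂) ^ (q + 1) = p₁ ^ q * p₂ := by
    rw [Real.mul_rpow (by positivity) (by positivity),
      ← Real.rpow_mul hp₁, ← Real.rpow_mul hp₂]
    rw [show w₁ * (q + 1) = q by rw [hw1def]; field_simp, show w₂ * (q + 1) = 1 by rw [hw2def]; field_simp,
      Real.rpow_one]
  rw [expand] at key2
  have hp1q : p₁ ^ q = t ^ q * ((q + 1) / q) ^ q := by
    rw [← Real.mul_rpow (le_of_lt ht0) (by positivity)]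
    congr 1
    rw [hp1def]
    ring
  rw [hp1q, hp2def] at key2
  have hprod : ((q + 1) / q) ^ q * (q / (q + 1)) ^ q = 1 := by
    rw [← Real.mul_rpow (by positivity) (by positivity),
      show (q + 1) / q * (q / (q + 1)) = 1 by field_simp, Real.one_rpow]
  have hc : (0:ℝ) < (q / (q + 1)) ^ q * (1 / (q + 1)) := by positivity
  have hmul := mul_le_mul_of_nonneg_right key2 (le_of_lt hc)
  have h1 : t ^ q * ((q + 1) / q) ^ q * ((1 - t) * (q + 1)) *
      ((q / (q + 1)) ^ q * (1 / (q + 1)))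
      = t ^ q * (1 - t) *
        ((((q + 1) / q) ^ q * (q / (q + 1)) ^ q) * ((q + 1) * (1 / (q + 1)))) := by
    ring
  rw [h1, hprod, show (q + 1) * (1 / (q + 1)) = 1 by field_simp, one_mul, mul_one,
    one_mul] at hmul
  exact hmul

theorem stmt_18 (a ε : ℝ) (hε : 0 < ε) (hεa : ε < a) (x : ℝ) (hx : 0 ≤ x) :
    Real.exp (-(a - ε) * x) - Real.exp (-a * x)
      ≤ Real.exp (a / ε * Real.log (1 - ε / a)) * (ε / (a - ε)) := by
  have ha : 0 < a := hε.trans hεa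
  have haε : 0 < a - ε := sub_pos.2 hεa
  set t : ℝ := Real.exp (-ε * x) with htdef
  have ht0 : 0 < t := Real.exp_pos _
  have ht1 : t ≤ 1 := by
    rw [htdef, Real.exp_le_one_iff]
    nlinarith
  set q : ℝ := (a - ε) / ε with hqdef
  have hq : 0 < q := by positivity
  have hlogt : Real.log t = -ε * x := Real.log_exp _
  have e1 : Real.exp (-(a - ε) * x) = t ^ q := by
    rw [Real.rpow_def_of_pos ht0, hlogt]
    congr 1
    rw [hqdef]
    field_simp
  have e2 : Real.exp (-a * x) = t ^ q * t := by
    have h : Real.exp (-a * x) = t ^ (q + 1) := by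
      rw [Real.rpow_def_of_pos ht0, hlogt]
      congr 1
      rw [hqdef]
      field_simp
      ring
    rw [h, Real.rpow_add ht0, Real.rpow_one]
  have e3 : Real.exp (a / ε * Real.log (1 - ε / a)) = (q / (q + 1)) ^ (q + 1) := by
    have h1 : 1 - ε / a = q / (q + 1) := by
      rw [hqdef]
      field_simp
      ring
    have h2 : a / ε = q + 1 := by rw [hqdef]; field_simp; ring
    rw [h1, h2, Real.rpow_def_of_pos (by positivity)]
    ring_nf
  rw [e1, e2, e3]
  have key := aux_tq q t hq ht0 ht1
  have hrhs : (q / (q + 1)) ^ (q + 1) * (ε / (a - ε))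
      = (q / (q + 1)) ^ q * (q / (q + 1)) * (ε / (a - ε)) := by
    rw [Real.rpow_add (by positivity), Real.rpow_one]
  rw [hrhs]
  have hεaε : q / (q + 1) * (ε / (a - ε)) = 1 / (q + 1) := by
    rw [hqdef]
    field_simp
  calc t ^ q - t ^ q * t = t ^ q * (1 - t) := by ring
    _ ≤ (q / (q + 1)) ^ q * (1 / (q + 1)) := key
    _ = (q / (q + 1)) ^ q * (q / (q + 1)) * (ε / (a - ε)) := by
        rw [mul_assoc, hεaε]
end
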